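/- Dyadic telescoping from up-branching: fix l ≥ 1 and a spatial coordinate x. Starting from x, subtract 2^{-(l+1)} (travel down one generation) and then add 2^{-(l+2)} + 2^{-(l+3)} + ⋯ (travel up every subsequent generation). The resulting limit equals x: x - 2^{-(l+1)} + Σ_{k=l+2}^∞ 2^{-k} = x. Consequently every dyadic rational a·2^{-n} ∈ (-1,1) arises as the limit of spatial coordinates of a nested sequence of branch points, so {(a·2^{-n}, 1/3) : n ≥ 1, a odd, |a| < 2^n} ⊂ closure(Σ₀) ∖ Σ₀, and closure(Σ₀) = Σ₀ ∪ ([-1,1] × {1/3}). -/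
import Mathlib

/-- The branching times `t_n = Σ_{m=1}^n 4^{-m}`. -/
noncomputable def tseq (n : ℕ) : ℝ := ∑ m ∈ Finset.range n, (1 / 4 : ℝ) ^ (m + 1)

/-- The branch points of generation `n` in the planar construction. -/
def branchPts : ℕ → Set (ℝ × ℝ)
  | 0 => {(0, 0)}
  | n + 1 => {q | ∃ p ∈ branchPts n,
      (q.1 = p.1 + (1 / 2 : ℝ) ^ (n + 1) ∨ q.1 = p.1 - (1 / 2 : ℝ) ^ (n + 1)) ∧
      q.2 = tseq (n + 1)}

lemma tseq_succ (n : ℕ) : tseq (n + 1) = tseq n + (1/4:ℝ)^(n+1) := by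
  rw [tseq, Finset.sum_range_succ, tseq]

lemma tseq_eq (n : ℕ) : tseq n = (1 - (1/4:ℝ)^n)/3 := by
  induction n with
  | zero => simp [tseq]
  | succ n ih => rw [tseq_succ, ih]; ring

lemma tseq_lt_third (n : ℕ) : tseq n < 1/3 := by
  rw [tseq_eq]
  have : (0:ℝ) < (1/4:ℝ)^n := by positivity
  linarith

lemma tseq_mono : Monotone tseq := by
  apply monotone_nat_of_le_succ
  intro n
  rw [tseq_succ]
  have : (0:ℝ) < (1/4:ℝ)^(n+1) := by positivity
  linarith

lemma tseq_nonneg (n : ℕ) : 0 ≤ tseq n := by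
  have h0 : tseq 0 = 0 := by simp [tseq]
  have := tseq_mono (Nat.zero_le n); linarith

lemma tseq_tendsto : Filter.Tendsto tseq Filter.atTop (nhds (1/3)) := by
  rw [funext tseq_eq]
  have h : Filter.Tendsto (fun n : ℕ => (1/4:ℝ)^n) Filter.atTop (nhds 0) :=
    tendsto_pow_atTop_nhds_zero_of_lt_one (by norm_num) (by norm_num)
  have := ((h.const_sub 1).div_const 3)
  simpa using this

lemma branchPts_snd {n : ℕ} {q : ℝ × ℝ} (hq : q ∈ branchPts n) : q.2 = tseq n := by
  cases n with
  | zero => simp [branchPts] at hq; rw [hq]; simp [tseq]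
  | succ n => obtain ⟨p, _, _, h⟩ := hq; exact h

lemma branchPts_fst {n : ℕ} {q : ℝ × ℝ} (hq : q ∈ branchPts n) :
    |q.1| ≤ 1 - (1/2:ℝ)^n := by
  induction n generalizing q with
  | zero => simp [branchPts] at hq; simp [hq]
  | succ n ih =>
    obtain ⟨p, hp, h1, _⟩ := hq
    have hb := ih hp
    have h2 : (1/2:ℝ)^(n+1) = (1/2)^n / 2 := by ring
    have h3 : (0:ℝ) ≤ (1/2:ℝ)^n := by positivity
    rcases h1 with h | h <;>
      · rw [h]
        have := abs_le.mp hb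
        rw [abs_le]
        constructor <;> linarith

lemma branchPts_finite (n : ℕ) : (branchPts n).Finite := by
  induction n with
  | zero => simp [branchPts]
  | succ n ih =>
    have hsub : branchPts (n+1) ⊆
        (fun p : ℝ × ℝ => (p.1 + (1/2:ℝ)^(n+1), tseq (n+1))) '' branchPts n ∪
        (fun p : ℝ × ℝ => (p.1 - (1/2:ℝ)^(n+1), tseq (n+1))) '' branchPts n := by
      rintro q ⟨p, hp, h1, h2⟩
      rcases h1 with h | h
      · exact Or.inl ⟨p, hp, by rw [Prod.ext_iff]; exact ⟨h.symm, h2.symm⟩⟩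
      · exact Or.inr ⟨p, hp, by rw [Prod.ext_iff]; exact ⟨h.symm, h2.symm⟩⟩
    exact Set.Finite.subset ((ih.image _).union (ih.image _)) hsub
/-- The set `Σ₀ ⊆ ℝ²` (coordinates `(X,t)`): the union over all generations of the line
segments of slope `±2^{n+1}` over `t ∈ [t_n, t_{n+1}]` emanating from the branch points of
generation `n`. -/
def Sigma0 : Set (ℝ × ℝ) :=
  {p | ∃ n : ℕ, ∃ q ∈ branchPts n, ∃ e : ℝ, (e = 1 ∨ e = -1) ∧
    p.2 ∈ Set.Icc (tseq n) (tseq (n + 1)) ∧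
    p.1 = q.1 + e * 2 ^ (n + 1) * (p.2 - tseq n)}

/-- Generation-`n` piece of `Sigma0`. -/
def SigmaN (n : ℕ) : Set (ℝ × ℝ) :=
  {p | ∃ q ∈ branchPts n, ∃ e : ℝ, (e = 1 ∨ e = -1) ∧
    p.2 ∈ Set.Icc (tseq n) (tseq (n + 1)) ∧
    p.1 = q.1 + e * 2 ^ (n + 1) * (p.2 - tseq n)}

lemma Sigma0_eq_iUnion : Sigma0 = ⋃ n, SigmaN n := by
  ext p; simp [Sigma0, SigmaN, Set.mem_iUnion]

/-- A single closed segment. -/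
def Seg (n : ℕ) (q : ℝ × ℝ) (e : ℝ) : Set (ℝ × ℝ) :=
  {p | p.2 ∈ Set.Icc (tseq n) (tseq (n + 1)) ∧
    p.1 = q.1 + e * 2 ^ (n + 1) * (p.2 - tseq n)}

lemma isClosed_Seg (n : ℕ) (q : ℝ × ℝ) (e : ℝ) : IsClosed (Seg n q e) := by
  have h1 : IsClosed {p : ℝ × ℝ | p.2 ∈ Set.Icc (tseq n) (tseq (n + 1))} :=
    isClosed_Icc.preimage continuous_snd
  have h2 : IsClosed {p : ℝ × ℝ | p.1 = q.1 + e * 2 ^ (n + 1) * (p.2 - tseq n)} :=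
    isClosed_eq continuous_fst (by continuity)
  exact h1.inter h2

lemma SigmaN_eq (n : ℕ) : SigmaN n = ⋃ q ∈ branchPts n, (Seg n q 1 ∪ Seg n q (-1)) := by
  ext p
  simp only [SigmaN, Seg, Set.mem_iUnion, Set.mem_union, Set.mem_setOf_eq]
  constructor
  · rintro ⟨q, hq, e, he, h1, h2⟩
    rcases he with he | he <;> subst he
    · exact ⟨q, hq, Or.inl ⟨h1, h2⟩⟩
    · exact ⟨q, hq, Or.inr ⟨h1, h2⟩⟩
  · rintro ⟨q, hq, h | h⟩
    · exact ⟨q, hq, 1, Or.inl rfl, h.1, h.2⟩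
    · exact ⟨q, hq, -1, Or.inr rfl, h.1, h.2⟩

lemma isClosed_SigmaN (n : ℕ) : IsClosed (SigmaN n) := by
  rw [SigmaN_eq]
  exact Set.Finite.isClosed_biUnion (branchPts_finite n)
    (fun q _ => (isClosed_Seg n q 1).union (isClosed_Seg n q (-1)))

lemma SigmaN_bounds {n : ℕ} {p : ℝ × ℝ} (hp : p ∈ SigmaN n) :
    |p.1| ≤ 1 ∧ 0 ≤ p.2 ∧ p.2 < 1/3 ∧ tseq n ≤ p.2 := by
  obtain ⟨q, hq, e, he, ⟨h1, h2⟩, h3⟩ := hp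
  have hb := branchPts_fst hq
  have habs : |e| = 1 := by rcases he with he | he <;> simp [he]
  have hd : p.2 - tseq n ≤ (1/4:ℝ)^(n+1) := by
    have := tseq_succ n; linarith
  have hd0 : 0 ≤ p.2 - tseq n := by linarith
  have hx : |p.1| ≤ 1 - (1/2:ℝ)^n + 2^(n+1) * (1/4:ℝ)^(n+1) := by
    rw [h3]
    calc |q.1 + e * 2 ^ (n + 1) * (p.2 - tseq n)|
        ≤ |q.1| + |e * 2 ^ (n + 1) * (p.2 - tseq n)| := abs_add_le _ _
      _ ≤ 1 - (1/2:ℝ)^n + 2^(n+1) * (1/4:ℝ)^(n+1) := by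
          rw [abs_mul, abs_mul, habs, one_mul, abs_of_nonneg (by positivity : (0:ℝ) ≤ (2:ℝ)^(n+1)),
            abs_of_nonneg hd0]
          have h2n : (0:ℝ) < 2^(n+1) := by positivity
          have := mul_le_mul_of_nonneg_left hd (le_of_lt h2n)
          linarith
  have hkey : (2:ℝ)^(n+1) * (1/4:ℝ)^(n+1) = (1/2:ℝ)^(n+1) := by
    rw [← mul_pow]; norm_num
  have hhalf : (1/2:ℝ)^(n+1) ≤ (1/2:ℝ)^n :=
    pow_le_pow_of_le_one (by norm_num) (by norm_num) (Nat.le_succ n)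
  refine ⟨by rw [hkey] at hx; linarith, le_trans (tseq_nonneg n) h1, ?_, h1⟩
  exact lt_of_le_of_lt h2 (tseq_lt_third (n+1))

lemma Sigma0_bounds {p : ℝ × ℝ} (hp : p ∈ Sigma0) :
    |p.1| ≤ 1 ∧ 0 ≤ p.2 ∧ p.2 < 1/3 := by
  rw [Sigma0_eq_iUnion] at hp
  obtain ⟨n, hn⟩ := Set.mem_iUnion.mp hp
  exact ⟨(SigmaN_bounds hn).1, (SigmaN_bounds hn).2.1, (SigmaN_bounds hn).2.2.1⟩

lemma branchPts_subset_Sigma0 {n : ℕ} {q : ℝ × ℝ} (hq : q ∈ branchPts n) : q ∈ Sigma0 := by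
  refine ⟨n, q, hq, 1, Or.inl rfl, ?_, ?_⟩
  · rw [branchPts_snd hq]
    exact ⟨le_refl _, tseq_mono (Nat.le_succ n)⟩
  · rw [branchPts_snd hq]; ring
/-- Greedy dyadic sign approximation of `x`. -/
noncomputable def approx (x : ℝ) : ℕ → ℝ
  | 0 => 0
  | n + 1 => approx x n + (if approx x n ≤ x then 1 else -1) * (1/2:ℝ)^(n+1)

lemma approx_mem (x : ℝ) (n : ℕ) : ((approx x n, tseq n) : ℝ × ℝ) ∈ branchPts n := by
  induction n with
  | zero => simp [approx, branchPts, tseq]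
  | succ n ih =>
    refine ⟨(approx x n, tseq n), ih, ?_, rfl⟩
    by_cases h : approx x n ≤ x
    · left; simp [approx, h]
    · right; simp only [approx, h, if_false]; ring

lemma approx_close {x : ℝ} (hx : |x| ≤ 1) (n : ℕ) : |x - approx x n| ≤ (1/2:ℝ)^n := by
  induction n with
  | zero => simpa [approx] using hx
  | succ n ih =>
    have h2 : (1/2:ℝ)^(n+1) = (1/2)^n / 2 := by ring
    have hle := abs_le.mp ih
    by_cases h : approx x n ≤ x
    · rw [show approx x (n+1) = approx x n + 1 * (1/2:ℝ)^(n+1) by simp [approx, h]]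
      rw [abs_le]; constructor <;> [skip; skip] <;> · simp only [one_mul]; linarith
    · rw [show approx x (n+1) = approx x n + (-1) * (1/2:ℝ)^(n+1) by simp [approx, h]]
      push_neg at h
      rw [abs_le]; constructor <;> · simp only [neg_one_mul]; linarith

lemma mem_closure_of_abs_le {x : ℝ} (hx : |x| ≤ 1) : ((x, 1/3) : ℝ × ℝ) ∈ closure Sigma0 := by
  have h1 : Filter.Tendsto (fun n => approx x n) Filter.atTop (nhds x) := by
    have h0 : Filter.Tendsto (fun n : ℕ => (1/2:ℝ)^n) Filter.atTop (nhds 0) :=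
      tendsto_pow_atTop_nhds_zero_of_lt_one (by norm_num) (by norm_num)
    have : Filter.Tendsto (fun n => x - approx x n) Filter.atTop (nhds 0) :=
      squeeze_zero_norm (fun n => by rw [Real.norm_eq_abs]; exact approx_close hx n) h0
    have h2 := Filter.Tendsto.const_sub x this
    simpa using h2
  have h3 : Filter.Tendsto (fun n => ((approx x n, tseq n) : ℝ × ℝ)) Filter.atTop
      (nhds (x, 1/3)) := h1.prodMk_nhds tseq_tendsto
  exact mem_closure_of_tendsto h3
    (Filter.Eventually.of_forall fun n => branchPts_subset_Sigma0 (approx_mem x n))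

lemma closure_Sigma0_subset :
    closure Sigma0 ⊆ Sigma0 ∪ Set.Icc (-1 : ℝ) 1 ×ˢ ({1 / 3} : Set ℝ) := by
  intro p hp
  have hK : closure Sigma0 ⊆ Set.Icc (-1:ℝ) 1 ×ˢ Set.Icc (0:ℝ) (1/3) := by
    apply closure_minimal
    · intro q hq
      obtain ⟨h1, h2, h3⟩ := Sigma0_bounds hq
      exact ⟨abs_le.mp h1, h2, le_of_lt h3⟩
    · exact (isClosed_Icc.prod isClosed_Icc)
  obtain ⟨hp1, hp2⟩ := hK hp
  rcases eq_or_lt_of_le hp2.2 with heq | hlt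
  · exact Or.inr ⟨hp1, heq⟩
  · -- p.2 < 1/3 : p lies in finitely many generations
    obtain ⟨N, hN⟩ := (tseq_tendsto.eventually (eventually_gt_nhds hlt)).exists
    have hUopen : IsOpen {q : ℝ × ℝ | q.2 < tseq N} := isOpen_Iio.preimage continuous_snd
    set C : Set (ℝ × ℝ) := ⋃ n ∈ Finset.range N, SigmaN n with hC
    have hCclosed : IsClosed C :=
      Set.Finite.isClosed_biUnion (Finset.finite_toSet _) (fun n _ => isClosed_SigmaN n)
    have hpC : p ∈ closure C := by
      rw [mem_closure_iff] at hp ⊢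
      intro O hO hpO
      obtain ⟨q, ⟨hqO, hqU⟩, hqS⟩ := hp (O ∩ {q : ℝ × ℝ | q.2 < tseq N})
        (hO.inter hUopen) ⟨hpO, hN⟩
      refine ⟨q, hqO, ?_⟩
      rw [Sigma0_eq_iUnion] at hqS
      obtain ⟨n, hn⟩ := Set.mem_iUnion.mp hqS
      have htn : tseq n ≤ q.2 := (SigmaN_bounds hn).2.2.2
      have hnN : n < N := by
        by_contra hcon
        push_neg at hcon
        have := tseq_mono hcon
        exact absurd hqU (by simp only [Set.mem_setOf_eq]; push_neg; linarith)
      exact Set.mem_biUnion (Finset.mem_range.mpr hnN) hn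
    have : p ∈ C := hCclosed.closure_subset hpC
    left
    rw [Sigma0_eq_iUnion]
    simp only [hC, Set.mem_iUnion] at this ⊢
    obtain ⟨n, _, hn⟩ := this
    exact ⟨n, hn⟩
/-- dyadic telescoping from up-branching
(`x - 2^{-(l+1)} + Σ_{k≥l+2} 2^{-k} = x`); consequently each point `(a·2⁻ⁿ, 1/3)` with `a`
odd, `|a| < 2ⁿ`, lies in `closure Σ₀ ∖ Σ₀`, and
`closure Σ₀ = Σ₀ ∪ ([-1,1] × {1/3})`. -/
theorem telescoping_and_closure_of_Sigma0 :
    (∀ (x : ℝ) (l : ℕ),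
      x - (1 / 2 : ℝ) ^ (l + 1) + ∑' k : ℕ, (1 / 2 : ℝ) ^ (l + 2 + k) = x) ∧
    {p : ℝ × ℝ | ∃ (n : ℕ) (a : ℤ), Odd a ∧ |a| < 2 ^ n ∧ p = ((a : ℝ) / 2 ^ n, 1 / 3)} ⊆
      closure Sigma0 \ Sigma0 ∧
    closure Sigma0 = Sigma0 ∪ Set.Icc (-1 : ℝ) 1 ×ˢ ({1 / 3} : Set ℝ) := by
  refine ⟨?_, ?_, ?_⟩
  · intro x l
    have h : ∑' k : ℕ, (1/2:ℝ)^(l+2+k) = (1/2:ℝ)^(l+1) := by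
      simp_rw [pow_add]
      rw [tsum_mul_left, tsum_geometric_of_lt_one (by norm_num) (by norm_num)]
      ring
    rw [h]; ring
  · rintro p ⟨n, a, _, habs, rfl⟩
    have h2n : (0:ℝ) < 2^n := by positivity
    have habs' : |(a:ℝ)| ≤ 2^n := by
      rw [← Int.cast_abs]
      exact_mod_cast habs.le
    have hx : |(a:ℝ)/2^n| ≤ 1 := by
      rw [abs_div, abs_of_pos h2n]
      exact (div_le_one h2n).mpr habs'
    constructor
    · exact mem_closure_of_abs_le hx
    · intro hmem
      have := (Sigma0_bounds hmem).2.2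
      norm_num at this
  · apply le_antisymm closure_Sigma0_subset
    rintro p (hp | ⟨h1, h2⟩)
    · exact subset_closure hp
    · have hp2 : p.2 = 1/3 := h2
      have hpe : p = (p.1, (1/3 : ℝ)) := Prod.ext rfl hp2
      rw [hpe]
      exact mem_closure_of_abs_le (abs_le.mpr h1)
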